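/- Semigroup property of the DR fixed-point relocator: Let A be maximally monotone on a real Hilbert space X, and for γ, δ > 0 define Q_{δ←γ} := (δ/γ)·Id + (1 − δ/γ)·J_{γA}. Then for all γ, δ, ε > 0, Q_{ε←δ} ∘ Q_{δ←γ} = Q_{ε←γ} as operators on X. -/

import Mathlib

open Filter
open scoped RealInnerProductSpace NNReal

/-- A set-valued operator is monotone. -/
def IsMonotoneOp {X : Type*} [NormedAddCommGroup X] [InnerProductSpace ℝ X]
    (A : X → Set X) : Prop :=
  ∀ ⦃x y u v : X⦄, u ∈ A x → v ∈ A y → 0 ≤ ⟪x - y, u - v⟫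

/-- A set-valued operator is maximally monotone. -/
def IsMaximalMonotoneOp {X : Type*} [NormedAddCommGroup X] [InnerProductSpace ℝ X]
    (A : X → Set X) : Prop :=
  IsMonotoneOp A ∧
    ∀ x u : X, (∀ y v : X, v ∈ A y → 0 ≤ ⟪x - y, u - v⟫) → u ∈ A x

/-- `J` is the resolvent of `γ • A`, i.e. `J = (Id + γ A)⁻¹`:
for every `x`, `x ∈ J x + γ • A (J x)`. -/
def IsResolventOf {X : Type*} [NormedAddCommGroup X] [InnerProductSpace ℝ X]
    (J : X → X) (A : X → Set X) (γ : ℝ) : Prop :=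
  ∀ x : X, γ⁻¹ • (x - J x) ∈ A (J x)

/-! Relocating `x` along the ray from `J_γ x` through `x` does not move the resolvent point:
`δ⁻¹ (Q_{δ←γ} x - J_γ x) = γ⁻¹ (x - J_γ x) ∈ A (J_γ x)`, so `J_δ (Q_{δ←γ} x) = J_γ x` by
uniqueness of resolvent points of a monotone operator. Hence `Q_{ε←δ} (Q_{δ←γ} x)` lies on the
same ray from `J_γ x` through `x`, and the parameters `ε / δ` and `δ / γ` multiply to `ε / γ`. -/

open AffineMap

section Relocator

variable {X : Type*} [NormedAddCommGroup X] [InnerProductSpace ℝ X]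

lemma IsResolventOf.apply_eq_of_mem {A : X → Set X} {J : X → X} {δ : ℝ}
    (hJ : IsResolventOf J A δ) (hA : IsMonotoneOp A) (hδ : 0 < δ) {y u : X}
    (hu : δ⁻¹ • (y - u) ∈ A u) : J y = u := by
  have hmono := hA (hJ y) hu
  rw [show δ⁻¹ • (y - J y) - δ⁻¹ • (y - u) = -δ⁻¹ • (J y - u) by module,
    real_inner_smul_right, real_inner_self_eq_norm_sq, neg_mul, neg_nonneg] at hmono
  have hsq : ‖J y - u‖ ^ 2 ≤ 0 := nonpos_of_mul_nonpos_right hmono (inv_pos.2 hδ)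
  rw [← sub_eq_zero, ← norm_eq_zero, ← sq_eq_zero_iff]
  exact le_antisymm hsq (sq_nonneg _)

/-- The paper's `Q_{δ←γ}`. -/
noncomputable def relocator (J : ℝ → X → X) (γ δ : ℝ) (x : X) : X :=
  lineMap (J γ x) x (δ / γ)

lemma relocator_apply (J : ℝ → X → X) (γ δ : ℝ) (x : X) :
    relocator J γ δ x = (δ / γ) • x + (1 - δ / γ) • J γ x := by
  rw [relocator, lineMap_apply_module, add_comm]

variable {A : X → Set X} {J : ℝ → X → X} {γ δ : ℝ}

lemma resolvent_relocator (hA : IsMonotoneOp A) (hJγ : IsResolventOf (J γ) A γ)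
    (hJδ : IsResolventOf (J δ) A δ) (hδ : 0 < δ) (x : X) :
    J δ (relocator J γ δ x) = J γ x := by
  refine hJδ.apply_eq_of_mem hA hδ ?_
  rw [relocator, ← vsub_eq_sub, lineMap_vsub_left, vsub_eq_sub, smul_smul, div_eq_mul_inv,
    inv_mul_cancel_left₀ hδ.ne']
  exact hJγ x

lemma relocator_relocator (hA : IsMonotoneOp A) (hJγ : IsResolventOf (J γ) A γ)
    (hJδ : IsResolventOf (J δ) A δ) (hδ : 0 < δ) (ε : ℝ) (x : X) :
    relocator J δ ε (relocator J γ δ x) = relocator J γ ε x := by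
  rw [relocator, resolvent_relocator hA hJγ hJδ hδ, relocator, relocator, lineMap_lineMap_right,
    div_mul_div_cancel₀ hδ.ne']

end Relocator

theorem DR_relocator_semigroup_general
    {X : Type*} [NormedAddCommGroup X] [InnerProductSpace ℝ X]
    (A : X → Set X) (hA : IsMaximalMonotoneOp A)
    (J : ℝ → X → X) (hJ : ∀ γ : ℝ, 0 < γ → IsResolventOf (J γ) A γ) :
    ∀ γ δ ε : ℝ, 0 < γ → 0 < δ → 0 < ε → ∀ x : X,
      (ε / δ) • ((δ / γ) • x + (1 - δ / γ) • J γ x)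
          + (1 - ε / δ) • J δ ((δ / γ) • x + (1 - δ / γ) • J γ x)
        = (ε / γ) • x + (1 - ε / γ) • J γ x := by
  intro γ δ ε hγ hδ _ x
  simpa only [relocator_apply] using relocator_relocator hA.1 (hJ γ hγ) (hJ δ hδ) hδ ε x

theorem DR_relocator_semigroup
    {X : Type*} [NormedAddCommGroup X] [InnerProductSpace ℝ X] [CompleteSpace X]
    (A : X → Set X) (hA : IsMaximalMonotoneOp A)
    (J : ℝ → X → X) (hJ : ∀ γ : ℝ, 0 < γ → IsResolventOf (J γ) A γ) :
    ∀ γ δ ε : ℝ, 0 < γ → 0 < δ → 0 < ε → ∀ x : X,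
      (ε / δ) • ((δ / γ) • x + (1 - δ / γ) • J γ x)
          + (1 - ε / δ) • J δ ((δ / γ) • x + (1 - δ / γ) • J γ x)
        = (ε / γ) • x + (1 - ε / γ) • J γ x :=
  DR_relocator_semigroup_general A hA J hJ
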